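/- arXiv:1711.03624 — 2 statements merged into one kernel-verified Lean document; each statement's English description precedes it below -/
import Mathlib

section
/- For any 3×3 unitary matrix V and any choice of rows i ≠ k and columns j ≠ l, the quantity Im(V_{ij} V_{kl} V_{il}* V_{kj}*) is independent of the choice of (i,j,k,l) up to the sign ε_{ikm}ε_{jln}; equivalently, there exists a single real number J such that Im(V_{ij} V_{kl} V_{il}* V_{kj}*) = J Σ_{m,n} ε_{ikm} ε_{jln} for all indices. -/
/-- The three-index Levi-Civita symbol on `Fin 3` (as a real number):
`ε i j k = ((j−i)(k−j)(k−i))/2` equals `+1`/`−1` for even/odd permutations of `(0,1,2)`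
and `0` otherwise. -/
def leviCivita (i j k : Fin 3) : ℝ :=
  ((((j : ℤ) - (i : ℤ)) * ((k : ℤ) - (j : ℤ)) * ((k : ℤ) - (i : ℤ)) / 2 : ℤ) : ℝ)

lemma leviCivita_same (i m : Fin 3) : leviCivita i i m = 0 := by
  simp [leviCivita]

lemma im_self_conj (a b : ℂ) :
    (a * b * (starRingEnd ℂ) b * (starRingEnd ℂ) a).im = 0 := by
  have h : a * b * (starRingEnd ℂ) b * (starRingEnd ℂ) a
      = (a * (starRingEnd ℂ) a) * (b * (starRingEnd ℂ) b) := by ring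
  rw [h, Complex.mul_conj, Complex.mul_conj]
  simp [← Complex.ofReal_mul]

/-- An antisymmetric real function on `Fin 3 × Fin 3` with rows summing to zero
is a multiple of the (summed) Levi-Civita symbol. -/
lemma anti_aux (g : Fin 3 → Fin 3 → ℝ) (hA : ∀ j l, g l j = -g j l)
    (hS : ∀ j, g j 0 + g j 1 + g j 2 = 0) (j l : Fin 3) :
    g j l = (∑ m : Fin 3, leviCivita j l m) * g 0 1 := by
  have h3 : ∀ x : Fin 3, x = 0 ∨ x = 1 ∨ x = 2 := by decide
  rcases h3 j with rfl | rfl | rfl <;> rcases h3 l with rfl | rfl | rfl <;>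
    rw [Fin.sum_univ_three] <;>
    norm_num [leviCivita] <;>
    linarith [hA 0 1, hA 0 2, hA 1 2, hA 0 0, hA 1 1, hA 2 2, hS 0, hS 1, hS 2]

/-- **Well-definedness of the Jarlskog invariant.**
For any 3×3 unitary matrix `V`, the quantities `Im (V_ij V_kl V_il* V_kj*)` are all equal up
to the sign `ε_ikm ε_jln`: there exists a single real number `J` with
`Im (V_ij V_kl V_il* V_kj*) = J · Σ_{m,n} ε_ikm ε_jln` for all indices. -/
theorem jarlskog_invariant_exists (V : Matrix (Fin 3) (Fin 3) ℂ)
    (hV : V ∈ Matrix.unitaryGroup (Fin 3) ℂ) :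
    ∃ J : ℝ, ∀ i j k l : Fin 3,
      (V i j * V k l * (starRingEnd ℂ) (V i l) * (starRingEnd ℂ) (V k j)).im =
        J * ∑ m : Fin 3, ∑ n : Fin 3, leviCivita i k m * leviCivita j l n := by
  -- row orthogonality
  have hrow : ∀ i k : Fin 3, i ≠ k →
      V k 0 * (starRingEnd ℂ) (V i 0) + V k 1 * (starRingEnd ℂ) (V i 1)
        + V k 2 * (starRingEnd ℂ) (V i 2) = 0 := by
    intro i k hik
    have h := congrFun (congrFun hV.2 k) i
    simp only [Matrix.mul_apply, Matrix.star_apply, Matrix.one_apply,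
      if_neg (Ne.symm hik), Fin.sum_univ_three] at h
    simpa using h
  -- column orthogonality (columns 0 and 1)
  have hcol : (starRingEnd ℂ) (V 0 0) * V 0 1 + (starRingEnd ℂ) (V 1 0) * V 1 1
      + (starRingEnd ℂ) (V 2 0) * V 2 1 = 0 := by
    have h := congrFun (congrFun hV.1 0) 1
    simp only [Matrix.mul_apply, Matrix.star_apply, Matrix.one_apply,
      Fin.sum_univ_three] at h
    simpa using h
  set J : ℝ := (V 0 0 * V 1 1 * (starRingEnd ℂ) (V 0 1) * (starRingEnd ℂ) (V 1 0)).im with hJ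
  -- the function of (i,k) at fixed columns (0,1)
  set h : Fin 3 → Fin 3 → ℝ :=
    fun i k => (V i 0 * V k 1 * (starRingEnd ℂ) (V i 1) * (starRingEnd ℂ) (V k 0)).im with hh
  have hhA : ∀ i k, h k i = -h i k := by
    intro i k
    have : V k 0 * V i 1 * (starRingEnd ℂ) (V k 1) * (starRingEnd ℂ) (V i 0)
        = (starRingEnd ℂ) (V i 0 * V k 1 * (starRingEnd ℂ) (V i 1) * (starRingEnd ℂ) (V k 0)) := by
      simp only [map_mul, Complex.conj_conj]; ring
    simp only [hh, this, Complex.conj_im]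
  have hhS : ∀ i, h i 0 + h i 1 + h i 2 = 0 := by
    intro i
    have key : V i 0 * V 0 1 * (starRingEnd ℂ) (V i 1) * (starRingEnd ℂ) (V 0 0)
        + V i 0 * V 1 1 * (starRingEnd ℂ) (V i 1) * (starRingEnd ℂ) (V 1 0)
        + V i 0 * V 2 1 * (starRingEnd ℂ) (V i 1) * (starRingEnd ℂ) (V 2 0) = 0 := by
      linear_combination (V i 0 * (starRingEnd ℂ) (V i 1)) * hcol
    have := congrArg Complex.im key
    simpa [hh, Complex.add_im] using this
  have hmain : ∀ i k, h i k = (∑ m : Fin 3, leviCivita i k m) * J := by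
    intro i k
    exact anti_aux h hhA hhS i k
  refine ⟨J, fun i j k l => ?_⟩
  have hsum : (∑ m : Fin 3, ∑ n : Fin 3, leviCivita i k m * leviCivita j l n)
      = (∑ m : Fin 3, leviCivita i k m) * (∑ n : Fin 3, leviCivita j l n) := by
    rw [Finset.sum_mul]
    exact Finset.sum_congr rfl fun m _ => by rw [Finset.mul_sum]
  rw [hsum]
  by_cases hik : i = k
  · subst hik
    rw [im_self_conj]
    simp [leviCivita_same]
  · -- fixed rows i ≠ k, vary columns
    set g : Fin 3 → Fin 3 → ℝ :=
      fun j l => (V i j * V k l * (starRingEnd ℂ) (V i l) * (starRingEnd ℂ) (V k j)).im with hg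
    have hgA : ∀ j l, g l j = -g j l := by
      intro j l
      have : V i l * V k j * (starRingEnd ℂ) (V i j) * (starRingEnd ℂ) (V k l)
          = (starRingEnd ℂ) (V i j * V k l * (starRingEnd ℂ) (V i l) * (starRingEnd ℂ) (V k j)) := by
        simp only [map_mul, Complex.conj_conj]; ring
      simp only [hg, this, Complex.conj_im]
    have hgS : ∀ j, g j 0 + g j 1 + g j 2 = 0 := by
      intro j
      have key : V i j * V k 0 * (starRingEnd ℂ) (V i 0) * (starRingEnd ℂ) (V k j)
          + V i j * V k 1 * (starRingEnd ℂ) (V i 1) * (starRingEnd ℂ) (V k j)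
          + V i j * V k 2 * (starRingEnd ℂ) (V i 2) * (starRingEnd ℂ) (V k j) = 0 := by
        linear_combination (V i j * (starRingEnd ℂ) (V k j)) * hrow i k hik
      have := congrArg Complex.im key
      simpa [hg, Complex.add_im] using this
    have h1 : g j l = (∑ n : Fin 3, leviCivita j l n) * g 0 1 :=
      anti_aux g hgA hgS j l
    have h2 : g 0 1 = (∑ m : Fin 3, leviCivita i k m) * J := hmain i k
    show g j l = J * ((∑ m : Fin 3, leviCivita i k m) * (∑ n : Fin 3, leviCivita j l n))
    rw [h1, h2]; ring
end

section
/- For a 3×3 unitary matrix V, all six unitarity triangles (one for each pair of distinct rows or distinct columns) have the same area, equal to |J|/2, where J is the Jarlskog invariant. -/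
open Complex
private lemma imswap (x y : ℂ) : (x * (starRingEnd ℂ) y).im = -(y * (starRingEnd ℂ) x).im := by
  simp [Complex.mul_im]; ring
private lemma tri3 (a : Fin 3 → ℂ) (h : a 0 + a 1 + a 2 = 0) :
    ∀ j l : Fin 3, j ≠ l →
      |(a j * (starRingEnd ℂ) (a l)).im| = |(a 0 * (starRingEnd ℂ) (a 1)).im| := by
  have h2 : a 2 = -a 0 - a 1 := by linear_combination h
  have e12 : (a 1 * (starRingEnd ℂ) (a 2)).im = (a 0 * (starRingEnd ℂ) (a 1)).im := by
    rw [h2]; simp [Complex.mul_im, Complex.sub_re, Complex.sub_im]; ring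
  have e02 : (a 0 * (starRingEnd ℂ) (a 2)).im = -(a 0 * (starRingEnd ℂ) (a 1)).im := by
    rw [h2]; simp [Complex.mul_im, Complex.sub_re, Complex.sub_im]; ring
  intro j l hjl
  fin_cases j <;> fin_cases l <;>
    simp only [show ((⟨0, by norm_num⟩ : Fin 3)) = 0 from rfl,
      show ((⟨1, by norm_num⟩ : Fin 3)) = 1 from rfl,
      show ((⟨2, by norm_num⟩ : Fin 3)) = 2 from rfl] at *
  · exact absurd rfl hjl
  · rw [e02, abs_neg]
  · rw [imswap, abs_neg]
  · exact absurd rfl hjl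
  · rw [e12]
  · rw [imswap (a 2) (a 0), e02, abs_neg, abs_neg]
  · rw [imswap (a 2) (a 1), e12, abs_neg]
  · exact absurd rfl hjl

/-- **All six unitarity triangles have the same area `|J|/2`.**
For a 3×3 unitary matrix `V`, unitarity of a pair of distinct columns `j ≠ l` gives a closed
triangle in `ℂ` with sides `z_i = V_ij (V_il)*` (`i = 1,2,3`), of area `(1/2)|Im (z_i z̄_k)|`
for any two distinct sides; similarly for any pair of distinct rows.  Each of these six
triangles has area `|J|/2`, where `J = Im (V₁₁ V₂₂ V₁₂* V₂₁*)` is the Jarlskog invariant. -/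
theorem unitarity_triangles_area (V : Matrix (Fin 3) (Fin 3) ℂ)
    (hV : V ∈ Matrix.unitaryGroup (Fin 3) ℂ) (J : ℝ)
    (hJ : J = (V 0 0 * V 1 1 * (starRingEnd ℂ) (V 0 1) * (starRingEnd ℂ) (V 1 0)).im) :
    (∀ j l i k : Fin 3, j ≠ l → i ≠ k →
      (1 / 2) * |((V i j * (starRingEnd ℂ) (V i l)) *
          (starRingEnd ℂ) (V k j * (starRingEnd ℂ) (V k l))).im| = |J| / 2) ∧
    (∀ i k j l : Fin 3, i ≠ k → j ≠ l →
      (1 / 2) * |((V i j * (starRingEnd ℂ) (V k j)) *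
          (starRingEnd ℂ) (V i l * (starRingEnd ℂ) (V k l))).im| = |J| / 2) := by
  have hmul : V * star V = 1 := (Matrix.mem_unitaryGroup_iff).mp hV
  have hmul' : star V * V = 1 := (Matrix.mem_unitaryGroup_iff').mp hV
  have hrow : ∀ i k : Fin 3, i ≠ k → ∑ j, V i j * (starRingEnd ℂ) (V k j) = 0 := by
    intro i k hik
    have := congrFun (congrFun hmul i) k
    simpa [Matrix.mul_apply, Matrix.one_apply, hik, Matrix.conjTranspose_apply] using this
  have hcol : ∀ j l : Fin 3, j ≠ l → ∑ i, V i j * (starRingEnd ℂ) (V i l) = 0 := by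
    intro j l hjl
    have h := congrFun (congrFun hmul' l) j
    simp [Matrix.mul_apply, Matrix.one_apply, hjl.symm, Matrix.conjTranspose_apply] at h
    calc ∑ i, V i j * (starRingEnd ℂ) (V i l)
        = ∑ i, (starRingEnd ℂ) (V i l) * V i j := by simp [mul_comm]
      _ = 0 := h
  set F : Fin 3 → Fin 3 → Fin 3 → Fin 3 → ℝ :=
    fun i k j l => ((V i j * (starRingEnd ℂ) (V k j)) *
      (starRingEnd ℂ) (V i l * (starRingEnd ℂ) (V k l))).im with hF
  have key : ∀ i k j l : Fin 3, i ≠ k → j ≠ l → |F i k j l| = |J| := by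
    intro i k j l hik hjl
    have step1 : |F i k j l| = |F i k 0 1| := by
      have h1 := tri3 (fun j => V i j * (starRingEnd ℂ) (V k j))
        (by have := hrow i k hik; simpa [Fin.sum_univ_three] using this) j l hjl
      simpa [hF, map_mul] using h1
    have step2 : |F i k 0 1| = |F 0 1 0 1| := by
      have h1 := tri3 (fun x => V x 0 * (starRingEnd ℂ) (V x 1))
        (by have := hcol 0 1 (by decide); simpa [Fin.sum_univ_three] using this) i k hik
      have e1 : ((fun x => V x 0 * (starRingEnd ℂ) (V x 1)) i *
          (starRingEnd ℂ) ((fun x => V x 0 * (starRingEnd ℂ) (V x 1)) k)) =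
          ((V i 0 * (starRingEnd ℂ) (V k 0)) *
            (starRingEnd ℂ) (V i 1 * (starRingEnd ℂ) (V k 1))) := by
        simp only [map_mul, Complex.conj_conj]; ring
      have e2 : ((fun x => V x 0 * (starRingEnd ℂ) (V x 1)) 0 *
          (starRingEnd ℂ) ((fun x => V x 0 * (starRingEnd ℂ) (V x 1)) 1)) =
          ((V 0 0 * (starRingEnd ℂ) (V 1 0)) *
            (starRingEnd ℂ) (V 0 1 * (starRingEnd ℂ) (V 1 1))) := by
        simp only [map_mul, Complex.conj_conj]; ring
      rw [e1, e2] at h1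
      simpa [hF] using h1
    have step3 : F 0 1 0 1 = J := by
      rw [hJ, hF]
      have : ((V 0 0 * (starRingEnd ℂ) (V 1 0)) *
          (starRingEnd ℂ) (V 0 1 * (starRingEnd ℂ) (V 1 1))) =
          (V 0 0 * V 1 1 * (starRingEnd ℂ) (V 0 1) * (starRingEnd ℂ) (V 1 0)) := by
        simp only [map_mul, Complex.conj_conj]; ring
      exact congrArg Complex.im this
    rw [step1, step2, step3]
  constructor
  · intro j l i k hjl hik
    have e : ((V i j * (starRingEnd ℂ) (V i l)) *
        (starRingEnd ℂ) (V k j * (starRingEnd ℂ) (V k l))) =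
        ((V i j * (starRingEnd ℂ) (V k j)) *
        (starRingEnd ℂ) (V i l * (starRingEnd ℂ) (V k l))) := by
      simp only [map_mul, Complex.conj_conj]; ring
    rw [e]
    have h := key i k j l hik hjl
    rw [hF] at h
    rw [h]; ring
  · intro i k j l hik hjl
    have h := key i k j l hik hjl
    rw [hF] at h
    rw [h]; ring
end
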